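/- Let α ≥ 0, γ ≥ 1 be real and β ∈ ℂ with 2(γ+α) > |β|. Then Σ_{n=1}^∞ |A_n|/(n+1) ≤ |β|/(2(γ+α)−|β|), where A_n = β^n Γ(γ+α)/Γ((γ+α)(n+1)). -/

import Mathlib

/-! Write `c = γ + α ≥ 1`. As `Γ` increases on `[2, ∞)`, `Γ(x + c) ≥ Γ(x + 1) = x Γ(x)` for
`x ≥ 1`, and induction on `n` with `x = c(n+1)` gives `Γ(c(n+1)) ≥ Γ(c) cⁿ n!`, i.e. `|A_n| ≤ |β|ⁿ / (cⁿ n!)`.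
Since `(n+1)! ≥ 2ⁿ`, the `n`-th term `|A_n| / (n+1)` is at most `(|β| / 2c)ⁿ`, and the geometric
series sums to the bound. -/

open Complex

noncomputable def rabA (α γ : ℝ) (β : ℂ) (n : ℕ) : ℂ :=
  β ^ n * (Real.Gamma (γ + α) : ℂ) / (Real.Gamma ((γ + α) * (n + 1)) : ℂ)

noncomputable def rab (α γ : ℝ) (β : ℂ) (z : ℂ) : ℂ :=
  z + ∑' k : ℕ, rabA α γ β (k + 1) * z ^ (k + 2)

noncomputable def rabPartial (α γ : ℝ) (β : ℂ) (m : ℕ) (z : ℂ) : ℂ :=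
  z + ∑ k ∈ Finset.range m, rabA α γ β (k + 1) * z ^ (k + 2)

noncomputable def rabD (α γ : ℝ) (β : ℂ) (z : ℂ) : ℂ :=
  1 + ∑' k : ℕ, ((k : ℂ) + 2) * rabA α γ β (k + 1) * z ^ (k + 1)

noncomputable def rabDPartial (α γ : ℝ) (β : ℂ) (m : ℕ) (z : ℂ) : ℂ :=
  1 + ∑ k ∈ Finset.range m, ((k : ℂ) + 2) * rabA α γ β (k + 1) * z ^ (k + 1)

noncomputable def rabAlex (α γ : ℝ) (β : ℂ) (z : ℂ) : ℂ :=
  z + ∑' k : ℕ, rabA α γ β (k + 1) / ((k : ℂ) + 2) * z ^ (k + 2)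

noncomputable def rabAlexPartial (α γ : ℝ) (β : ℂ) (m : ℕ) (z : ℂ) : ℂ :=
  z + ∑ k ∈ Finset.range m, rabA α γ β (k + 1) / ((k : ℂ) + 2) * z ^ (k + 2)

open scoped Nat

namespace Real

theorem Gamma_add_one_le_Gamma_add {x c : ℝ} (hx : 1 ≤ x) (hc : 1 ≤ c) :
    Gamma (x + 1) ≤ Gamma (x + c) :=
  Gamma_strictMonoOn_Ici.monotoneOn (Set.mem_Ici.2 (by linarith)) (Set.mem_Ici.2 (by linarith))
    (by linarith)

theorem Gamma_mul_pow_mul_factorial_le {c : ℝ} (hc : 1 ≤ c) (n : ℕ) :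
    Gamma c * c ^ n * n ! ≤ Gamma (c * (n + 1)) := by
  induction n with
  | zero => simp
  | succ n ih =>
    have hx : 1 ≤ c * (n + 1) := by nlinarith [(n.cast_nonneg : (0 : ℝ) ≤ n)]
    calc Gamma c * c ^ (n + 1) * ↑(n + 1)!
        = c * (n + 1) * (Gamma c * c ^ n * n !) := by
          push_cast [Nat.factorial_succ]; ring
      _ ≤ c * (n + 1) * Gamma (c * (n + 1)) := by gcongr
      _ = Gamma (c * (n + 1) + 1) := (Gamma_add_one (by positivity)).symm
      _ ≤ Gamma (c * (n + 1) + c) := Gamma_add_one_le_Gamma_add hx hc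
      _ = Gamma (c * ((n + 1 : ℕ) + 1)) := by push_cast; ring_nf

end Real

theorem tsum_le_div_one_sub_of_le_pow_succ {f : ℕ → ℝ} {r : ℝ} (hf₀ : ∀ k, 0 ≤ f k)
    (hf : ∀ k, f k ≤ r ^ (k + 1)) (hr : r < 1) : ∑' k, f k ≤ r / (1 - r) := by
  have hr₀ : 0 ≤ r := by simpa using (hf₀ 0).trans (hf 0)
  have hgeom : HasSum (fun k ↦ r ^ (k + 1)) (r * (1 - r)⁻¹) := by
    simpa only [pow_succ'] using (hasSum_geometric_of_lt_one hr₀ hr).mul_left r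
  exact hasSum_le hf ((hgeom.summable.of_nonneg_of_le hf₀ hf).hasSum) hgeom

theorem norm_rabA_le {α γ : ℝ} (β : ℂ) (hc : 1 ≤ γ + α) (n : ℕ) :
    ‖rabA α γ β n‖ ≤ ‖β‖ ^ n / ((γ + α) ^ n * n !) := by
  have hΓ : 0 < Real.Gamma (γ + α) := Real.Gamma_pos_of_pos (by linarith)
  have hΓn : 0 < Real.Gamma ((γ + α) * (n + 1)) := Real.Gamma_pos_of_pos (by positivity)
  have hΓle := Real.Gamma_mul_pow_mul_factorial_le hc n
  rw [rabA, norm_div, norm_mul, norm_pow, Complex.norm_real, Complex.norm_real,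
    Real.norm_of_nonneg hΓ.le, Real.norm_of_nonneg hΓn.le]
  calc ‖β‖ ^ n * Real.Gamma (γ + α) / Real.Gamma ((γ + α) * (n + 1))
      ≤ ‖β‖ ^ n * Real.Gamma (γ + α) / (Real.Gamma (γ + α) * (γ + α) ^ n * n !) := by
        gcongr
    _ = ‖β‖ ^ n / ((γ + α) ^ n * n !) := by
        rw [mul_assoc, mul_comm (‖β‖ ^ n), mul_div_mul_left _ _ hΓ.ne']

theorem norm_rabA_succ_div_le {α γ : ℝ} (β : ℂ) (hc : 1 ≤ γ + α) (k : ℕ) :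
    ‖rabA α γ β (k + 1)‖ / (k + 2) ≤ (‖β‖ / (2 * (γ + α))) ^ (k + 1) := by
  have hfac : (2 : ℝ) ^ (k + 1) ≤ (k + 2) * (k + 1)! := by
    have := @Nat.factorial_mul_pow_le_factorial 1 (k + 1)
    rw [Nat.factorial_one, one_mul, Nat.add_comm 1 (k + 1), Nat.factorial_succ] at this
    exact_mod_cast this
  calc ‖rabA α γ β (k + 1)‖ / (k + 2)
      ≤ ‖β‖ ^ (k + 1) / ((γ + α) ^ (k + 1) * (k + 1)!) / (k + 2) := by
        gcongr; exact norm_rabA_le β hc (k + 1)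
    _ = ‖β‖ ^ (k + 1) / ((γ + α) ^ (k + 1) * ((k + 2) * (k + 1)!)) := by
        rw [div_div]; ring
    _ ≤ ‖β‖ ^ (k + 1) / ((γ + α) ^ (k + 1) * 2 ^ (k + 1)) := by
        have : 0 < γ + α := by linarith
        gcongr
    _ = (‖β‖ / (2 * (γ + α))) ^ (k + 1) := by rw [div_pow, mul_pow, mul_comm]

theorem rabA_alex_sum_bound (α γ : ℝ) (β : ℂ) (hα : 0 ≤ α) (hγ : 1 ≤ γ)
    (hβ : ‖β‖ < 2 * (γ + α)) :
    (∑' k : ℕ, ‖rabA α γ β (k + 1)‖ / ((k : ℝ) + 2)) ≤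
      ‖β‖ / (2 * (γ + α) - ‖β‖) := by
  have hc : 1 ≤ γ + α := by linarith
  have hr : ‖β‖ / (2 * (γ + α)) < 1 := (div_lt_one (by linarith)).2 hβ
  calc (∑' k : ℕ, ‖rabA α γ β (k + 1)‖ / ((k : ℝ) + 2))
      ≤ ‖β‖ / (2 * (γ + α)) / (1 - ‖β‖ / (2 * (γ + α))) :=
        tsum_le_div_one_sub_of_le_pow_succ (fun _ ↦ by positivity)
          (norm_rabA_succ_div_le β hc) hr
    _ = ‖β‖ / (2 * (γ + α) - ‖β‖) := by
        have : 2 * (γ + α) ≠ 0 := by linarith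
        field_simp
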